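/- arXiv:2208.08929 — 3 statements merged into one kernel-verified Lean document; each statement's English description precedes it below -/
import Mathlib

section
/- The closed-loop response matrices satisfy the second affine System Level Synthesis constraint: Φxw * (1 − ZA) − Φxe * 𝒞 = 1 and Φuw * (1 − ZA) − Φue * 𝒞 = 0. (Sufficiency direction, part 2b, of the paper's Proposition 1.) -/
open Matrix

/-- `M` is block lower triangular: the `(t,s)` block vanishes whenever `s > t`. -/
def IsBlockLowerTri {T a b : ℕ} (M : Matrix (Fin T × Fin a) (Fin T × Fin b) ℝ) : Prop :=
  ∀ (t s : Fin T) (i : Fin a) (j : Fin b), t < s → M (t, i) (s, j) = 0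

/-- `M` is strictly block lower triangular: the `(t,s)` block vanishes whenever `s ≥ t`. -/
def IsStrictBlockLowerTri {T a b : ℕ} (M : Matrix (Fin T × Fin a) (Fin T × Fin b) ℝ) : Prop :=
  ∀ (t s : Fin T) (i : Fin a) (j : Fin b), t ≤ s → M (t, i) (s, j) = 0

/-- `M` is block diagonal: the `(t,s)` block vanishes whenever `s ≠ t`. -/
def IsBlockDiag {T a b : ℕ} (M : Matrix (Fin T × Fin a) (Fin T × Fin b) ℝ) : Prop :=
  ∀ (t s : Fin T) (i : Fin a) (j : Fin b), t ≠ s → M (t, i) (s, j) = 0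

lemma strict_mul_lower {T a b c : ℕ}
    {A : Matrix (Fin T × Fin a) (Fin T × Fin b) ℝ}
    {B : Matrix (Fin T × Fin b) (Fin T × Fin c) ℝ}
    (hA : IsStrictBlockLowerTri A) (hB : IsBlockLowerTri B) :
    IsStrictBlockLowerTri (A * B) := by
  intro t s i j hts
  rw [Matrix.mul_apply]
  apply Finset.sum_eq_zero
  rintro ⟨r, k⟩ _
  rcases le_or_gt t r with h | h
  · rw [hA t r i k h, zero_mul]
  · rw [hB r s k j (lt_of_lt_of_le h hts), mul_zero]

lemma pow_strict_bound {T a : ℕ}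
    {N : Matrix (Fin T × Fin a) (Fin T × Fin a) ℝ}
    (hN : IsStrictBlockLowerTri N) :
    ∀ (k : ℕ) (t s : Fin T) (i j : Fin a), (t : ℕ) < (s : ℕ) + k →
      (N ^ k) (t, i) (s, j) = 0 := by
  intro k
  induction k with
  | zero =>
    intro t s i j h
    simp only [pow_zero, Matrix.one_apply]
    have : (t, i) ≠ (s, j) := by
      intro he
      have := congrArg Prod.fst he
      simp only at this
      omega
    simp [this]
  | succ k ih =>
    intro t s i j h
    rw [pow_succ, Matrix.mul_apply]
    apply Finset.sum_eq_zero
    rintro ⟨r, m⟩ _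
    rcases le_or_gt (t : ℕ) (r : ℕ) with hr | hr
    · rcases lt_or_ge (r : ℕ) ((s : ℕ) + 1) with h2 | h2
      · rw [hN r s m j (by exact_mod_cast Nat.lt_succ_iff.mp h2), mul_zero]
      · rw [ih t r i m (by omega), zero_mul]
    · rcases lt_or_ge (t : ℕ) ((r : ℕ) + k) with h2 | h2
      · rw [ih t r i m h2, zero_mul]
      · rw [hN r s m j (by omega), mul_zero]

lemma strict_nilpotent {T a : ℕ}
    {N : Matrix (Fin T × Fin a) (Fin T × Fin a) ℝ}
    (hN : IsStrictBlockLowerTri N) : IsNilpotent N := by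
  refine ⟨T, ?_⟩
  ext ⟨t, i⟩ ⟨s, j⟩
  rw [pow_strict_bound hN T t s i j (by omega)]
  rfl

theorem stmt_5 (T dx du dy : ℕ) (hT : 1 ≤ T)
    (ZA : Matrix (Fin T × Fin dx) (Fin T × Fin dx) ℝ)
    (ZB : Matrix (Fin T × Fin dx) (Fin T × Fin du) ℝ)
    (𝒞 : Matrix (Fin T × Fin dy) (Fin T × Fin dx) ℝ)
    (𝒦 : Matrix (Fin T × Fin du) (Fin T × Fin dy) ℝ)
    (hZA : IsStrictBlockLowerTri ZA) (hZB : IsStrictBlockLowerTri ZB)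
    (hC : IsBlockDiag 𝒞) (hK : IsBlockLowerTri 𝒦)
    (Φxw : Matrix (Fin T × Fin dx) (Fin T × Fin dx) ℝ)
    (Φxe : Matrix (Fin T × Fin dx) (Fin T × Fin dy) ℝ)
    (Φuw : Matrix (Fin T × Fin du) (Fin T × Fin dx) ℝ)
    (Φue : Matrix (Fin T × Fin du) (Fin T × Fin dy) ℝ)
    (hΦxw : Φxw = (1 - ZA - ZB * 𝒦 * 𝒞)⁻¹)
    (hΦxe : Φxe = Φxw * ZB * 𝒦)
    (hΦuw : Φuw = 𝒦 * 𝒞 * Φxw)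
    (hΦue : Φue = 𝒦 * 𝒞 * Φxe + 𝒦) :
    Φxw * (1 - ZA) - Φxe * 𝒞 = 1 ∧ Φuw * (1 - ZA) - Φue * 𝒞 = 0 := by
  have hClow : IsBlockLowerTri 𝒞 := fun t s i j h => hC t s i j (ne_of_lt h)
  have hKC : IsBlockLowerTri (𝒦 * 𝒞) := by
    intro t s i j hts
    rw [Matrix.mul_apply]
    apply Finset.sum_eq_zero
    rintro ⟨r, k⟩ _
    rcases lt_or_ge t r with h | h
    · rw [hK t r i k h, zero_mul]
    · rw [hClow r s k j (lt_of_le_of_lt h hts), mul_zero]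
  have hN : IsStrictBlockLowerTri (ZA + ZB * 𝒦 * 𝒞) := by
    intro t s i j hts
    have h2 := strict_mul_lower hZB hKC t s i j hts
    simp [Matrix.add_apply, Matrix.mul_assoc, hZA t s i j hts, h2]
  have hUnit : IsUnit (1 - ZA - ZB * 𝒦 * 𝒞) := by
    have : (1 : Matrix (Fin T × Fin dx) (Fin T × Fin dx) ℝ) - ZA - ZB * 𝒦 * 𝒞
        = 1 - (ZA + ZB * 𝒦 * 𝒞) := by rw [sub_sub]
    rw [this]
    exact (strict_nilpotent hN).isUnit_one_sub
  have hdet : IsUnit (1 - ZA - ZB * 𝒦 * 𝒞).det :=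
    (Matrix.isUnit_iff_isUnit_det _).mp hUnit
  have hinv : Φxw * (1 - ZA - ZB * 𝒦 * 𝒞) = 1 := by
    rw [hΦxw]; exact Matrix.nonsing_inv_mul _ hdet
  have h1 : Φxw * (1 - ZA) - Φxe * 𝒞 = 1 := by
    rw [hΦxe]
    calc Φxw * (1 - ZA) - Φxw * ZB * 𝒦 * 𝒞
        = Φxw * (1 - ZA - ZB * 𝒦 * 𝒞) := by
          simp only [Matrix.mul_sub, Matrix.mul_one, Matrix.mul_assoc]
      _ = 1 := hinv
  refine ⟨h1, ?_⟩
  rw [hΦuw, hΦue]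
  calc 𝒦 * 𝒞 * Φxw * (1 - ZA) - (𝒦 * 𝒞 * Φxe + 𝒦) * 𝒞
      = 𝒦 * 𝒞 * (Φxw * (1 - ZA) - Φxe * 𝒞) - 𝒦 * 𝒞 := by
        simp only [Matrix.mul_sub, Matrix.sub_mul, Matrix.add_mul, Matrix.mul_add,
          Matrix.mul_one, Matrix.mul_assoc]
        abel
    _ = 0 := by rw [h1]; simp
end

section
/- Necessity direction of the paper's Proposition 1, step 2: the matrix 𝒦 := Φue − Φuw * Φxw⁻¹ * Φxe is block lower triangular. -/
open Matrix

lemma IsBlockLowerTri.mul' {T a b c : ℕ}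
    {A : Matrix (Fin T × Fin a) (Fin T × Fin b) ℝ}
    {B : Matrix (Fin T × Fin b) (Fin T × Fin c) ℝ}
    (hA : IsBlockLowerTri A) (hB : IsBlockLowerTri B) :
    IsBlockLowerTri (A * B) := by
  intro t s i j h
  rw [Matrix.mul_apply]
  apply Finset.sum_eq_zero
  rintro ⟨r, k⟩ _
  rcases lt_or_ge t r with hr | hr
  · rw [hA t r i k hr, zero_mul]
  · rw [hB r s k j (lt_of_le_of_lt hr h), mul_zero]

theorem stmt_9 (T dx du dy : ℕ) (hT : 1 ≤ T)
    (ZA : Matrix (Fin T × Fin dx) (Fin T × Fin dx) ℝ)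
    (ZB : Matrix (Fin T × Fin dx) (Fin T × Fin du) ℝ)
    (𝒞 : Matrix (Fin T × Fin dy) (Fin T × Fin dx) ℝ)
    (hZA : IsStrictBlockLowerTri ZA) (hZB : IsStrictBlockLowerTri ZB)
    (hC : IsBlockDiag 𝒞)
    (Φxw : Matrix (Fin T × Fin dx) (Fin T × Fin dx) ℝ)
    (Φxe : Matrix (Fin T × Fin dx) (Fin T × Fin dy) ℝ)
    (Φuw : Matrix (Fin T × Fin du) (Fin T × Fin dx) ℝ)
    (Φue : Matrix (Fin T × Fin du) (Fin T × Fin dy) ℝ)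
    (hΦxw : IsBlockLowerTri Φxw) (hΦxe : IsBlockLowerTri Φxe)
    (hΦuw : IsBlockLowerTri Φuw) (hΦue : IsBlockLowerTri Φue)
    (haff1 : (1 - ZA) * Φxw - ZB * Φuw = 1)
    (haff2 : (1 - ZA) * Φxe - ZB * Φue = 0)
    (haff3 : Φxw * (1 - ZA) - Φxe * 𝒞 = 1)
    (haff4 : Φuw * (1 - ZA) - Φue * 𝒞 = 0) :
    IsBlockLowerTri (Φue - Φuw * Φxw⁻¹ * Φxe) := by
  -- diagonal blocks of Φxw are identity
  have hdiag : ∀ (t : Fin T) (i j : Fin dx),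
      Φxw (t, i) (t, j) = if i = j then 1 else 0 := by
    intro t i j
    have h1 : ((1 - ZA) * Φxw) (t, i) (t, j) = Φxw (t, i) (t, j) := by
      rw [Matrix.mul_apply]
      rw [Finset.sum_eq_single (t, i)]
      · simp [Matrix.sub_apply, Matrix.one_apply, hZA t t i i le_rfl]
      · rintro ⟨s, k⟩ _ hne
        rcases lt_or_ge s t with h | h
        · rw [hΦxw s t k j h, mul_zero]
        · have hz := hZA t s i k h
          have hone : (1 : Matrix (Fin T × Fin dx) (Fin T × Fin dx) ℝ) (t, i) (s, k) = 0 :=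
            Matrix.one_apply_ne (fun hc => hne hc.symm)
          simp [Matrix.sub_apply, hz, hone]
      · intro h; exact absurd (Finset.mem_univ _) h
    have h2 : (ZB * Φuw) (t, i) (t, j) = 0 := by
      rw [Matrix.mul_apply]
      apply Finset.sum_eq_zero
      rintro ⟨s, k⟩ _
      rcases lt_or_ge s t with h | h
      · rw [hΦuw s t k j h, mul_zero]
      · rw [hZB t s i k h, zero_mul]
    have := congrFun (congrFun haff1 (t, i)) (t, j)
    rw [Matrix.sub_apply, h1, h2, sub_zero, Matrix.one_apply] at this
    rw [this]
    simp [Prod.ext_iff]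
  -- Φxw is block triangular in mathlib's sense
  have hBT : Φxw.BlockTriangular (fun p => OrderDual.toDual p.1) := by
    rintro ⟨s, k⟩ ⟨t, l⟩ h
    exact hΦxw s t k l (by exact_mod_cast h)
  have hdet : Φxw.det = 1 := by
    rw [hBT.det_fintype]
    apply Finset.prod_eq_one
    intro k _
    have hblk : Φxw.toSquareBlock (fun p => OrderDual.toDual p.1) k = 1 := by
      ext ⟨⟨s, i⟩, hs⟩ ⟨⟨t, j⟩, ht⟩
      have hst : s = t := by
        have : OrderDual.toDual s = OrderDual.toDual t := hs.trans ht.symm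
        exact_mod_cast this
      subst hst
      simp only [Matrix.toSquareBlock_def, Matrix.of_apply, Matrix.one_apply,
        Subtype.mk.injEq, Prod.mk.injEq, hdiag]
      simp
    rw [hblk, Matrix.det_one]
  haveI : Invertible Φxw := Φxw.invertibleOfIsUnitDet (by rw [hdet]; exact isUnit_one)
  have hinv : Φxw⁻¹.BlockTriangular (fun p => OrderDual.toDual p.1) :=
    Matrix.blockTriangular_inv_of_blockTriangular hBT
  have hinvBLT : IsBlockLowerTri Φxw⁻¹ := by
    intro t s i j h
    exact hinv (show OrderDual.toDual s < OrderDual.toDual t from by exact_mod_cast h)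
  intro t s i j h
  rw [Matrix.sub_apply, hΦue t s i j h,
    (hΦuw.mul' hinvBLT).mul' hΦxe t s i j h, sub_zero]
end

section
/- Proposition 1 (System Level Synthesis for partially-observed LTV systems): the following are equivalent. (i) There exists a block lower triangular matrix 𝒦 : Matrix (Fin T × Fin du) (Fin T × Fin dy) ℝ such that 1 − ZA − ZB * 𝒦 * 𝒞 is invertible and Φxw = (1 − ZA − ZB * 𝒦 * 𝒞)⁻¹, Φxe = Φxw * ZB * 𝒦, Φuw = 𝒦 * 𝒞 * Φxw, Φue = 𝒦 * 𝒞 * Φxe + 𝒦. (ii) Φxw, Φxe, Φuw, Φue are all block lower triangular and satisfy (1 − ZA) * Φxw − ZB * Φuw = 1, (1 − ZA) * Φxe − ZB * Φue = 0, Φxw * (1 − ZA) − Φxe * 𝒞 = 1, and Φuw * (1 − ZA) − Φue * 𝒞 = 0. Moreover, when these hold, Φxw is invertible and 𝒦 = Φue − Φuw * Φxw⁻¹ * Φxe. -/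
open Matrix

section Aux

variable {T a b c : ℕ}

lemma blt_one : IsBlockLowerTri (1 : Matrix (Fin T × Fin a) (Fin T × Fin a) ℝ) := by
  intro t s i j h
  exact Matrix.one_apply_ne (fun hij => (ne_of_lt h) (congrArg Prod.fst hij))

lemma sblt_blt {M : Matrix (Fin T × Fin a) (Fin T × Fin b) ℝ}
    (hM : IsStrictBlockLowerTri M) : IsBlockLowerTri M :=
  fun t s i j h => hM t s i j h.le

lemma bdiag_blt {M : Matrix (Fin T × Fin a) (Fin T × Fin b) ℝ}
    (hM : IsBlockDiag M) : IsBlockLowerTri M :=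
  fun t s i j h => hM t s i j h.ne

lemma blt_add {M N : Matrix (Fin T × Fin a) (Fin T × Fin b) ℝ}
    (hM : IsBlockLowerTri M) (hN : IsBlockLowerTri N) : IsBlockLowerTri (M + N) := by
  intro t s i j h
  simp [Matrix.add_apply, hM t s i j h, hN t s i j h]

lemma blt_sub {M N : Matrix (Fin T × Fin a) (Fin T × Fin b) ℝ}
    (hM : IsBlockLowerTri M) (hN : IsBlockLowerTri N) : IsBlockLowerTri (M - N) := by
  intro t s i j h
  simp [Matrix.sub_apply, hM t s i j h, hN t s i j h]

lemma sblt_add {M N : Matrix (Fin T × Fin a) (Fin T × Fin b) ℝ}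
    (hM : IsStrictBlockLowerTri M) (hN : IsStrictBlockLowerTri N) :
    IsStrictBlockLowerTri (M + N) := by
  intro t s i j h
  simp [Matrix.add_apply, hM t s i j h, hN t s i j h]

lemma sblt_neg' {M : Matrix (Fin T × Fin a) (Fin T × Fin b) ℝ}
    (hM : IsStrictBlockLowerTri M) : IsStrictBlockLowerTri (-M) := by
  intro t s i j h
  simp [Matrix.neg_apply, hM t s i j h]

lemma blt_mul {M : Matrix (Fin T × Fin a) (Fin T × Fin b) ℝ}
    {N : Matrix (Fin T × Fin b) (Fin T × Fin c) ℝ}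
    (hM : IsBlockLowerTri M) (hN : IsBlockLowerTri N) : IsBlockLowerTri (M * N) := by
  intro t s i j h
  rw [Matrix.mul_apply]
  apply Finset.sum_eq_zero
  rintro ⟨r, k⟩ -
  rcases lt_or_ge t r with hr | hr
  · rw [hM t r i k hr, zero_mul]
  · rw [hN r s k j (lt_of_le_of_lt hr h), mul_zero]

lemma sblt_mul_blt {M : Matrix (Fin T × Fin a) (Fin T × Fin b) ℝ}
    {N : Matrix (Fin T × Fin b) (Fin T × Fin c) ℝ}
    (hM : IsStrictBlockLowerTri M) (hN : IsBlockLowerTri N) :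
    IsStrictBlockLowerTri (M * N) := by
  intro t s i j h
  rw [Matrix.mul_apply]
  apply Finset.sum_eq_zero
  rintro ⟨r, k⟩ -
  rcases le_or_gt t r with hr | hr
  · rw [hM t r i k hr, zero_mul]
  · rw [hN r s k j (lt_of_lt_of_le hr h), mul_zero]

lemma blt_mul_sblt {M : Matrix (Fin T × Fin a) (Fin T × Fin b) ℝ}
    {N : Matrix (Fin T × Fin b) (Fin T × Fin c) ℝ}
    (hM : IsBlockLowerTri M) (hN : IsStrictBlockLowerTri N) :
    IsStrictBlockLowerTri (M * N) := by
  intro t s i j h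
  rw [Matrix.mul_apply]
  apply Finset.sum_eq_zero
  rintro ⟨r, k⟩ -
  rcases lt_or_ge t r with hr | hr
  · rw [hM t r i k hr, zero_mul]
  · rw [hN r s k j (le_trans hr h), mul_zero]

lemma blt_pow {M : Matrix (Fin T × Fin a) (Fin T × Fin a) ℝ}
    (hM : IsBlockLowerTri M) : ∀ k, IsBlockLowerTri (M ^ k) := by
  intro k
  induction k with
  | zero => simpa using blt_one
  | succ n ih => rw [pow_succ]; exact blt_mul ih hM

lemma sblt_pow_entry {S : Matrix (Fin T × Fin a) (Fin T × Fin a) ℝ}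
    (hS : IsStrictBlockLowerTri S) :
    ∀ k (t s : Fin T) (i j : Fin a), t.val < s.val + k → (S ^ k) (t, i) (s, j) = 0 := by
  intro k
  induction k with
  | zero =>
    intro t s i j h
    simp only [Nat.add_zero] at h
    rw [pow_zero]
    exact Matrix.one_apply_ne (fun hij => (Fin.ne_of_lt h) (congrArg Prod.fst hij))
  | succ n ih =>
    intro t s i j h
    rw [pow_succ, Matrix.mul_apply]
    apply Finset.sum_eq_zero
    rintro ⟨r, k'⟩ -
    rcases lt_or_ge t.val (r.val + n) with hr | hr
    · rw [ih t r i k' hr, zero_mul]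
    · have : r ≤ s := by omega
      rw [hS r s k' j this, mul_zero]

lemma sblt_pow_T {S : Matrix (Fin T × Fin a) (Fin T × Fin a) ℝ}
    (hS : IsStrictBlockLowerTri S) : S ^ T = 0 := by
  ext ⟨t, i⟩ ⟨s, j⟩
  rw [Matrix.zero_apply]
  exact sblt_pow_entry hS T t s i j (by omega)

lemma one_sub_inv {S : Matrix (Fin T × Fin a) (Fin T × Fin a) ℝ}
    (hS : IsStrictBlockLowerTri S) :
    IsUnit (1 - S).det ∧ IsBlockLowerTri (1 - S)⁻¹ ∧
      (1 - S) * (1 - S)⁻¹ = 1 ∧ (1 - S)⁻¹ * (1 - S) = 1 := by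
  set G := ∑ k ∈ Finset.range T, S ^ k with hG
  have hST : S ^ T = 0 := sblt_pow_T hS
  have hGr : G * (1 - S) = 1 := by
    have h := geom_sum_mul S T
    rw [hST] at h
    calc G * (1 - S) = -(G * (S - 1)) := by noncomm_ring
      _ = -((0 : Matrix _ _ ℝ) - 1) := by rw [hG, h]
      _ = 1 := by simp
  have hGl : (1 - S) * G = 1 := by
    have h := mul_geom_sum S T
    rw [hST] at h
    calc (1 - S) * G = -((S - 1) * G) := by noncomm_ring
      _ = -((0 : Matrix _ _ ℝ) - 1) := by rw [hG, h]
      _ = 1 := by simp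
  have hu : IsUnit (1 - S).det := Matrix.isUnit_det_of_left_inverse hGr
  have hinv : (1 - S)⁻¹ = G := Matrix.inv_eq_right_inv hGl
  have hGblt : IsBlockLowerTri G := by
    intro t s i j h
    rw [hG, Matrix.sum_apply]
    exact Finset.sum_eq_zero fun k _ => blt_pow (sblt_blt hS) k t s i j h
  refine ⟨hu, ?_, ?_, ?_⟩ <;> rw [hinv]
  · exact hGblt
  · exact hGl
  · exact hGr

end Aux

/-- Proposition 1 (System Level Synthesis for partially-observed LTV systems). -/
theorem stmt_13 (T dx du dy : ℕ) (hT : 1 ≤ T)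
    (ZA : Matrix (Fin T × Fin dx) (Fin T × Fin dx) ℝ)
    (ZB : Matrix (Fin T × Fin dx) (Fin T × Fin du) ℝ)
    (𝒞 : Matrix (Fin T × Fin dy) (Fin T × Fin dx) ℝ)
    (hZA : IsStrictBlockLowerTri ZA) (hZB : IsStrictBlockLowerTri ZB)
    (hC : IsBlockDiag 𝒞)
    (Φxw : Matrix (Fin T × Fin dx) (Fin T × Fin dx) ℝ)
    (Φxe : Matrix (Fin T × Fin dx) (Fin T × Fin dy) ℝ)
    (Φuw : Matrix (Fin T × Fin du) (Fin T × Fin dx) ℝ)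
    (Φue : Matrix (Fin T × Fin du) (Fin T × Fin dy) ℝ) :
    ((∃ 𝒦 : Matrix (Fin T × Fin du) (Fin T × Fin dy) ℝ,
        IsBlockLowerTri 𝒦 ∧ IsUnit (1 - ZA - ZB * 𝒦 * 𝒞).det ∧
        Φxw = (1 - ZA - ZB * 𝒦 * 𝒞)⁻¹ ∧ Φxe = Φxw * ZB * 𝒦 ∧
        Φuw = 𝒦 * 𝒞 * Φxw ∧ Φue = 𝒦 * 𝒞 * Φxe + 𝒦) ↔
      (IsBlockLowerTri Φxw ∧ IsBlockLowerTri Φxe ∧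
        IsBlockLowerTri Φuw ∧ IsBlockLowerTri Φue ∧
        (1 - ZA) * Φxw - ZB * Φuw = 1 ∧ (1 - ZA) * Φxe - ZB * Φue = 0 ∧
        Φxw * (1 - ZA) - Φxe * 𝒞 = 1 ∧ Φuw * (1 - ZA) - Φue * 𝒞 = 0)) ∧
    (∀ 𝒦 : Matrix (Fin T × Fin du) (Fin T × Fin dy) ℝ,
        IsBlockLowerTri 𝒦 → IsUnit (1 - ZA - ZB * 𝒦 * 𝒞).det →
        Φxw = (1 - ZA - ZB * 𝒦 * 𝒞)⁻¹ → Φxe = Φxw * ZB * 𝒦 →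
        Φuw = 𝒦 * 𝒞 * Φxw → Φue = 𝒦 * 𝒞 * Φxe + 𝒦 →
        IsUnit Φxw.det ∧ 𝒦 = Φue - Φuw * Φxw⁻¹ * Φxe) := by
  constructor
  · constructor
    · -- (i) → (ii)
      rintro ⟨𝒦, hKb, hdet, hxw, hxe, huw, hue⟩
      have hNs : IsStrictBlockLowerTri (ZA + ZB * 𝒦 * 𝒞) :=
        sblt_add hZA (sblt_mul_blt (sblt_mul_blt hZB hKb) (bdiag_blt hC))
      obtain ⟨hu, hGblt, hl, hr⟩ := one_sub_inv hNs
      have hEq : 1 - ZA - ZB * 𝒦 * 𝒞 = 1 - (ZA + ZB * 𝒦 * 𝒞) := by rw [sub_sub]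
      rw [hEq] at hxw
      have hWblt : IsBlockLowerTri Φxw := hxw ▸ hGblt
      have hinv1 : (1 - (ZA + ZB * 𝒦 * 𝒞)) * Φxw = 1 := by rw [hxw]; exact hl
      have hinv2 : Φxw * (1 - (ZA + ZB * 𝒦 * 𝒞)) = 1 := by rw [hxw]; exact hr
      have hEblt : IsBlockLowerTri Φxe := by
        rw [hxe]; exact blt_mul (sblt_blt (blt_mul_sblt hWblt hZB)) hKb
      have hUblt : IsBlockLowerTri Φuw := by
        rw [huw]; exact blt_mul (blt_mul hKb (bdiag_blt hC)) hWblt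
      have hVblt : IsBlockLowerTri Φue := by
        rw [hue]; exact blt_add (blt_mul (blt_mul hKb (bdiag_blt hC)) hEblt) hKb
      refine ⟨hWblt, hEblt, hUblt, hVblt, ?_, ?_, ?_, ?_⟩
      · rw [huw]
        have h : (1 - ZA) * Φxw - ZB * (𝒦 * 𝒞 * Φxw) =
            (1 - (ZA + ZB * 𝒦 * 𝒞)) * Φxw := by
          simp only [Matrix.mul_sub, Matrix.sub_mul, Matrix.mul_add, Matrix.add_mul,
            Matrix.mul_one, Matrix.one_mul, Matrix.mul_assoc]
          abel
        rw [h, hinv1]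
      · rw [hue, hxe]
        have h : (1 - ZA) * (Φxw * ZB * 𝒦) - ZB * (𝒦 * 𝒞 * (Φxw * ZB * 𝒦) + 𝒦) =
            ((1 - (ZA + ZB * 𝒦 * 𝒞)) * Φxw) * (ZB * 𝒦) - ZB * 𝒦 := by
          simp only [Matrix.mul_sub, Matrix.sub_mul, Matrix.mul_add, Matrix.add_mul,
            Matrix.mul_one, Matrix.one_mul, Matrix.mul_assoc]
          abel
        rw [h, hinv1, Matrix.one_mul, sub_self]
      · rw [hxe]
        have h : Φxw * (1 - ZA) - Φxw * ZB * 𝒦 * 𝒞 =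
            Φxw * (1 - (ZA + ZB * 𝒦 * 𝒞)) := by
          simp only [Matrix.mul_sub, Matrix.sub_mul, Matrix.mul_add, Matrix.add_mul,
            Matrix.mul_one, Matrix.one_mul, Matrix.mul_assoc]
          abel
        rw [h, hinv2]
      · rw [huw, hue, hxe]
        have h : 𝒦 * 𝒞 * Φxw * (1 - ZA) - (𝒦 * 𝒞 * (Φxw * ZB * 𝒦) + 𝒦) * 𝒞 =
            (𝒦 * 𝒞) * (Φxw * (1 - (ZA + ZB * 𝒦 * 𝒞))) - 𝒦 * 𝒞 := by
          simp only [Matrix.mul_sub, Matrix.sub_mul, Matrix.mul_add, Matrix.add_mul,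
            Matrix.mul_one, Matrix.one_mul, Matrix.mul_assoc]
          abel
        rw [h, hinv2, Matrix.mul_one, sub_self]
    · -- (ii) → (i)
      rintro ⟨hW, hE, hU, hV, e1, e2, e3, e4⟩
      have hSs : IsStrictBlockLowerTri (-(ZA * Φxw + ZB * Φuw)) :=
        sblt_neg' (sblt_add (sblt_mul_blt hZA hW) (sblt_mul_blt hZB hU))
      have hw1 : Φxw = 1 - -(ZA * Φxw + ZB * Φuw) := by
        calc Φxw = (1 - ZA) * Φxw - ZB * Φuw + (ZA * Φxw + ZB * Φuw) := by
              simp only [Matrix.mul_sub, Matrix.sub_mul, Matrix.mul_add, Matrix.add_mul,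
                Matrix.mul_one, Matrix.one_mul, Matrix.mul_assoc]
              abel
          _ = 1 + (ZA * Φxw + ZB * Φuw) := by rw [e1]
          _ = 1 - -(ZA * Φxw + ZB * Φuw) := by abel
      obtain ⟨hu', hGblt', hl', hr'⟩ := one_sub_inv hSs
      rw [← hw1] at hu' hGblt' hl' hr'
      have h1' : ZB * Φuw = (1 - ZA) * Φxw - 1 := by
        rw [sub_eq_iff_eq_add.mp e1]; abel
      have h2' : ZB * Φue = (1 - ZA) * Φxe := (sub_eq_zero.mp e2).symm
      have h3' : Φxe * 𝒞 = Φxw * (1 - ZA) - 1 := by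
        rw [sub_eq_iff_eq_add.mp e3]; abel
      have h4' : Φue * 𝒞 = Φuw * (1 - ZA) := (sub_eq_zero.mp e4).symm
      have kC : (Φue - Φuw * Φxw⁻¹ * Φxe) * 𝒞 = Φuw * Φxw⁻¹ := by
        calc (Φue - Φuw * Φxw⁻¹ * Φxe) * 𝒞
            = Φue * 𝒞 - Φuw * (Φxw⁻¹ * (Φxe * 𝒞)) := by
              simp only [Matrix.mul_sub, Matrix.sub_mul, Matrix.mul_add, Matrix.add_mul,
                Matrix.mul_one, Matrix.one_mul, Matrix.mul_assoc]
          _ = Φuw * (1 - ZA) - Φuw * (Φxw⁻¹ * (Φxw * (1 - ZA) - 1)) := by rw [h3', h4']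
          _ = Φuw * (1 - ZA) - Φuw * (Φxw⁻¹ * Φxw) * (1 - ZA) + Φuw * Φxw⁻¹ := by
              simp only [Matrix.mul_sub, Matrix.sub_mul, Matrix.mul_add, Matrix.add_mul,
                Matrix.mul_one, Matrix.one_mul, Matrix.mul_assoc]
              abel
          _ = Φuw * Φxw⁻¹ := by rw [hr', Matrix.mul_one]; abel
      have kB : ZB * (Φue - Φuw * Φxw⁻¹ * Φxe) = Φxw⁻¹ * Φxe := by
        calc ZB * (Φue - Φuw * Φxw⁻¹ * Φxe)
            = ZB * Φue - (ZB * Φuw) * (Φxw⁻¹ * Φxe) := by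
              simp only [Matrix.mul_sub, Matrix.sub_mul, Matrix.mul_add, Matrix.add_mul,
                Matrix.mul_one, Matrix.one_mul, Matrix.mul_assoc]
          _ = (1 - ZA) * Φxe - ((1 - ZA) * Φxw - 1) * (Φxw⁻¹ * Φxe) := by rw [h1', h2']
          _ = (1 - ZA) * Φxe - (1 - ZA) * (Φxw * Φxw⁻¹) * Φxe + Φxw⁻¹ * Φxe := by
              simp only [Matrix.mul_sub, Matrix.sub_mul, Matrix.mul_add, Matrix.add_mul,
                Matrix.mul_one, Matrix.one_mul, Matrix.mul_assoc]
              abel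
          _ = Φxw⁻¹ * Φxe := by rw [hl', Matrix.mul_one]; abel
      have hclosed : 1 - ZA - ZB * (Φue - Φuw * Φxw⁻¹ * Φxe) * 𝒞 = Φxw⁻¹ := by
        have h : ZB * (Φue - Φuw * Φxw⁻¹ * Φxe) * 𝒞 = 1 - ZA - Φxw⁻¹ := by
          calc ZB * (Φue - Φuw * Φxw⁻¹ * Φxe) * 𝒞
              = (Φxw⁻¹ * Φxe) * 𝒞 := by rw [kB]
            _ = Φxw⁻¹ * (Φxe * 𝒞) := by rw [Matrix.mul_assoc]
            _ = Φxw⁻¹ * (Φxw * (1 - ZA) - 1) := by rw [h3']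
            _ = (Φxw⁻¹ * Φxw) * (1 - ZA) - Φxw⁻¹ := by
                simp only [Matrix.mul_sub, Matrix.sub_mul, Matrix.mul_add, Matrix.add_mul,
                  Matrix.mul_one, Matrix.one_mul, Matrix.mul_assoc]
            _ = 1 - ZA - Φxw⁻¹ := by rw [hr', Matrix.one_mul]
        rw [h]; abel
      refine ⟨Φue - Φuw * Φxw⁻¹ * Φxe,
        blt_sub hV (blt_mul (blt_mul hU hGblt') hE), ?_, ?_, ?_, ?_, ?_⟩
      · rw [hclosed]; exact Matrix.isUnit_det_of_right_inverse hr'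
      · rw [hclosed, Matrix.nonsing_inv_nonsing_inv _ hu']
      · rw [Matrix.mul_assoc, kB, ← Matrix.mul_assoc, hl', Matrix.one_mul]
      · rw [kC, Matrix.mul_assoc, hr', Matrix.mul_one]
      · rw [kC]; abel
  · -- Moreover
    intro 𝒦 hKb hdet hxw hxe huw hue
    have hNs : IsStrictBlockLowerTri (ZA + ZB * 𝒦 * 𝒞) :=
      sblt_add hZA (sblt_mul_blt (sblt_mul_blt hZB hKb) (bdiag_blt hC))
    obtain ⟨hu, hGblt, hl, hr⟩ := one_sub_inv hNs
    have hEq : 1 - ZA - ZB * 𝒦 * 𝒞 = 1 - (ZA + ZB * 𝒦 * 𝒞) := by rw [sub_sub]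
    rw [hEq] at hxw
    have huΦ : IsUnit Φxw.det := by
      apply Matrix.isUnit_det_of_right_inverse (B := 1 - (ZA + ZB * 𝒦 * 𝒞))
      rw [hxw]; exact hr
    refine ⟨huΦ, ?_⟩
    have hΦ : Φxw * Φxw⁻¹ = 1 := Matrix.mul_nonsing_inv _ huΦ
    rw [hue, huw]
    have h5 : 𝒦 * 𝒞 * Φxw * Φxw⁻¹ = 𝒦 * 𝒞 := by
      rw [Matrix.mul_assoc (𝒦 * 𝒞), hΦ, Matrix.mul_one]
    rw [h5]; abel
end
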